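/- arXiv:1412.7065 — 2 statements merged into one kernel-verified Lean document; each statement's English description precedes it below -/
import Mathlib

section
/- Assume N ≥ 4 and let U be any N×N unitary matrix. Then the Shannon entropy of the probability vector Q = (R_1, R_2−R_1, …, R_N−R_{N−1}) satisfies H(Q) ≤ (3/4)·ln(N−1) + (1/4)·ln 4 + (3/4)·ln(4/3). -/
open MeasureTheory

/-- The measurable space structure on matrices (the product σ-algebra, which coincides with the
Borel σ-algebra). -/
instance {m n α : Type*} [MeasurableSpace α] : MeasurableSpace (Matrix m n α) :=
  inferInstanceAs (MeasurableSpace (m → n → α))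

/-- The operator norm (largest singular value) of a rectangular complex matrix, i.e. the norm of
the induced linear map between Euclidean spaces. -/
noncomputable def opNorm {m n : Type*} [Fintype m] [Fintype n] [DecidableEq n]
    (M : Matrix m n ℂ) : ℝ :=
  ‖LinearMap.toContinuousLinearMap (Matrix.toEuclideanLin M)‖

/-- `‖Û^(n,m)‖`: the maximal operator norm of an `n × m` submatrix of the `N × N` matrix `U`,
the maximum being taken over all choices of `n` rows and `m` columns. -/
noncomputable def maxSubNorm (N n m : ℕ) (U : Matrix (Fin N) (Fin N) ℂ) : ℝ :=
  ⨆ f : Fin n ↪ Fin N, ⨆ g : Fin m ↪ Fin N, opNorm (U.submatrix f g)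

/-- `s_k = max{‖Û^(1,k)‖, ‖Û^(2,k−1)‖, …, ‖Û^(k,1)‖}`, the maximal operator norm of a
submatrix of `U` with `n + m = k + 1` rows and columns (`n, m ≥ 1`).  By convention `s_0 = 0`
(the supremum over the empty range). -/
noncomputable def sk (N : ℕ) (U : Matrix (Fin N) (Fin N) ℂ) (k : ℕ) : ℝ :=
  ⨆ a : Fin k, maxSubNorm N (a.1 + 1) (k - a.1) U

/-- `R_k = ((1 + s_k)/2)²` for `1 ≤ k ≤ N`, with the convention `R_0 = 0`, so that the vector
`Q = (R_1, R_2 − R_1, …, R_N − R_{N−1})` is given by `Q_k = R_k − R_{k−1}`. -/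
noncomputable def Rcoef (N : ℕ) (U : Matrix (Fin N) (Fin N) ℂ) (k : ℕ) : ℝ :=
  if k = 0 then 0 else ((1 + sk N U k) / 2) ^ 2

/-- The vector `Q = (R_1, R_2 − R_1, …, R_N − R_{N−1})`, indexed by `i : Fin N`
(so `Q i = R_{i+1} − R_i`). -/
noncomputable def Qvec (N : ℕ) (U : Matrix (Fin N) (Fin N) ℂ) (i : Fin N) : ℝ :=
  Rcoef N U (i.1 + 1) - Rcoef N U i.1

/-!
Every `s_k` lies in `[0, 1]`, because submatrices of a unitary matrix are contractions, and `s_k`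
is nondecreasing in `k < N`, because deleting a column of a matrix cannot increase its operator
norm. Hence `Q` is a nonnegative vector of total mass `R_N ≤ 1` whose first entry is
`R_1 ≥ 1/4`. For such a vector, Gibbs' inequality against the reference distribution
`(1/4, 3/(4(N-1)), …, 3/(4(N-1)))` bounds the entropy by `p₀ log 4 + (1 - p₀) log (4(N-1)/3)`,
which is largest at `p₀ = 1/4` as soon as `4(N-1)/3 ≥ 4`.
-/

namespace Matrix

open scoped Matrix.Norms.L2Operator

variable {𝕜 l m n : Type*} [RCLike 𝕜] [Fintype m] [Fintype n] [DecidableEq n]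

lemma l2_opNorm_one_le : ‖(1 : Matrix n n 𝕜)‖ ≤ 1 := by
  rw [← l2_opNorm_toEuclideanCLM, map_one]
  exact ContinuousLinearMap.norm_id_le

lemma l2_opNorm_le_one_of_conjTranspose_mul_self_eq_one {A : Matrix m n 𝕜} (h : Aᴴ * A = 1) :
    ‖A‖ ≤ 1 := by
  have h1 : ‖A‖ * ‖A‖ ≤ 1 := by
    rw [← l2_opNorm_conjTranspose_mul_self, h]; exact l2_opNorm_one_le
  nlinarith [norm_nonneg A]

lemma l2_opNorm_le_one_of_mem_unitaryGroup {U : Matrix n n 𝕜} (hU : U ∈ unitaryGroup n 𝕜) :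
    ‖U‖ ≤ 1 :=
  l2_opNorm_le_one_of_conjTranspose_mul_self_eq_one (Matrix.mem_unitaryGroup_iff'.mp hU)

lemma l2_opNorm_submatrix_id_le [Fintype l] [DecidableEq l] (A : Matrix m n 𝕜) {g : l → n}
    (hg : Function.Injective g) : ‖A.submatrix id g‖ ≤ ‖A‖ := by
  set P : Matrix n l 𝕜 := (1 : Matrix n n 𝕜).submatrix id g
  have hP : Pᴴ * P = 1 := by
    simpa [P, conjTranspose_submatrix] using
      (mul_submatrix_one (Equiv.refl n) g ((1 : Matrix n n 𝕜).submatrix g id)).trans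
        (submatrix_one g hg)
  calc ‖A.submatrix id g‖ = ‖A * P‖ := by
        simpa using congrArg norm (mul_submatrix_one (Equiv.refl n) g A).symm
    _ ≤ ‖A‖ * ‖P‖ := l2_opNorm_mul A P
    _ ≤ ‖A‖ := mul_le_of_le_one_right (norm_nonneg A)
        (l2_opNorm_le_one_of_conjTranspose_mul_self_eq_one hP)

lemma l2_opNorm_submatrix_le {k : Type*} [DecidableEq m] [Fintype l] [DecidableEq l] [Fintype k]
    [DecidableEq k] (A : Matrix m n 𝕜) {f : k → m} {g : l → n} (hf : Function.Injective f)
    (hg : Function.Injective g) : ‖A.submatrix f g‖ ≤ ‖A‖ :=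
  calc ‖A.submatrix f g‖ = ‖(A.submatrix f id).submatrix id g‖ := rfl
    _ ≤ ‖A.submatrix f id‖ := l2_opNorm_submatrix_id_le _ hg
    _ = ‖Aᴴ.submatrix id f‖ := by rw [← l2_opNorm_conjTranspose, conjTranspose_submatrix]
    _ ≤ ‖Aᴴ‖ := l2_opNorm_submatrix_id_le _ hf
    _ = ‖A‖ := l2_opNorm_conjTranspose A

end Matrix

section SubmatrixNorms

-- `opNorm M` is by definition the norm of `M` under `Matrix.Norms.L2Operator`, so the lemmas above
-- apply to it directly.

variable {N : ℕ} (U : Matrix (Fin N) (Fin N) ℂ)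

lemma maxSubNorm_nonneg (n m : ℕ) : 0 ≤ maxSubNorm N n m U :=
  Real.iSup_nonneg fun _ => Real.iSup_nonneg fun _ => norm_nonneg _

lemma opNorm_submatrix_le_maxSubNorm {n m : ℕ} (f : Fin n ↪ Fin N) (g : Fin m ↪ Fin N) :
    opNorm (U.submatrix f g) ≤ maxSubNorm N n m U :=
  le_ciSup_of_le (Set.finite_range _).bddAbove f <|
    le_ciSup (Set.finite_range fun g : Fin m ↪ Fin N => opNorm (U.submatrix f g)).bddAbove g

lemma maxSubNorm_le_one (hU : U ∈ Matrix.unitaryGroup (Fin N) ℂ) (n m : ℕ) :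
    maxSubNorm N n m U ≤ 1 :=
  Real.iSup_le (fun f => Real.iSup_le (fun g =>
    (Matrix.l2_opNorm_submatrix_le U f.injective g.injective).trans
      (Matrix.l2_opNorm_le_one_of_mem_unitaryGroup hU)) zero_le_one) zero_le_one

lemma maxSubNorm_le_maxSubNorm_succ {n m : ℕ} (hm : m < N) :
    maxSubNorm N n m U ≤ maxSubNorm N n (m + 1) U := by
  refine Real.iSup_le (fun f => Real.iSup_le (fun g => ?_) (maxSubNorm_nonneg _ _ _))
    (maxSubNorm_nonneg _ _ _)
  obtain ⟨j, hj⟩ : ∃ j, j ∉ Set.range g := by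
    by_contra! h
    have := Fintype.card_le_of_surjective g fun j => h j
    simp only [Fintype.card_fin] at this
    omega
  calc opNorm (U.submatrix f g)
      = opNorm ((U.submatrix f (Fin.Embedding.snoc g hj)).submatrix id Fin.castSucc) := by
        congr 1; ext i k; simp
    _ ≤ opNorm (U.submatrix f (Fin.Embedding.snoc g hj)) :=
        Matrix.l2_opNorm_submatrix_le _ Function.injective_id (Fin.castSucc_injective m)
    _ ≤ maxSubNorm N n (m + 1) U := opNorm_submatrix_le_maxSubNorm U f _

lemma sk_nonneg (k : ℕ) : 0 ≤ sk N U k :=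
  Real.iSup_nonneg fun _ => maxSubNorm_nonneg _ _ _

lemma sk_le_one (hU : U ∈ Matrix.unitaryGroup (Fin N) ℂ) (k : ℕ) : sk N U k ≤ 1 :=
  Real.iSup_le (fun _ => maxSubNorm_le_one U hU _ _) zero_le_one

lemma sk_le_sk_succ {k : ℕ} (hk : k < N) : sk N U k ≤ sk N U (k + 1) := by
  refine Real.iSup_le (fun a => ?_) (sk_nonneg _ _)
  calc maxSubNorm N (a.1 + 1) (k - a.1) U ≤ maxSubNorm N (a.1 + 1) (k - a.1 + 1) U :=
        maxSubNorm_le_maxSubNorm_succ U (by omega)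
    _ = maxSubNorm N (a.1 + 1) (k + 1 - a.1) U := by rw [Nat.sub_add_comm a.2.le]
    _ ≤ sk N U (k + 1) :=
        le_ciSup (f := fun b : Fin (k + 1) => maxSubNorm N (b.1 + 1) (k + 1 - b.1) U)
          (Set.finite_range _).bddAbove a.castSucc

lemma Rcoef_le_one (hU : U ∈ Matrix.unitaryGroup (Fin N) ℂ) (k : ℕ) : Rcoef N U k ≤ 1 := by
  unfold Rcoef
  split_ifs
  · exact zero_le_one
  · nlinarith [sk_nonneg U k, sk_le_one U hU k]

lemma Rcoef_le_Rcoef_succ {k : ℕ} (hk : k < N) : Rcoef N U k ≤ Rcoef N U (k + 1) := by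
  simp only [Rcoef, k.succ_ne_zero, if_false]
  split_ifs
  · positivity
  · nlinarith [sk_nonneg U k, sk_le_sk_succ U hk]

lemma one_div_four_le_Rcoef_one : 1 / 4 ≤ Rcoef N U 1 := by
  simp only [Rcoef, one_ne_zero, if_false]
  nlinarith [sk_nonneg U 1]

lemma Qvec_nonneg (i : Fin N) : 0 ≤ Qvec N U i :=
  sub_nonneg.mpr (Rcoef_le_Rcoef_succ U i.2)

lemma sum_Qvec : ∑ i, Qvec N U i = Rcoef N U N := by
  unfold Qvec
  rw [Fin.sum_univ_eq_sum_range (fun i => Rcoef N U (i + 1) - Rcoef N U i),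
    Finset.sum_range_sub, show Rcoef N U 0 = 0 from if_pos rfl, sub_zero]

end SubmatrixNorms

open Real

lemma Real.negMulLog_le_neg_mul_log_add_sub {x r : ℝ} (hx : 0 ≤ x) (hr : 0 < r) :
    negMulLog x ≤ -x * log r + (r - x) := by
  rcases hx.eq_or_lt with rfl | hx
  · simpa using hr.le
  have h := mul_le_mul_of_nonneg_left (log_le_sub_one_of_pos (div_pos hr hx)) hx.le
  have hrx : x * (r / x - 1) = r - x := by field_simp
  rw [log_div hr.ne' hx.ne', mul_sub, hrx] at h
  rw [negMulLog]
  linarith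

lemma Finset.sum_negMulLog_le {ι : Type*} {s : Finset ι} (hs : s.Nonempty) {p : ι → ℝ}
    (hp : ∀ i ∈ s, 0 ≤ p i) {m : ℝ} (hm : 0 < m) :
    ∑ i ∈ s, negMulLog (p i) ≤ (∑ i ∈ s, p i) * log (s.card / m) + (m - ∑ i ∈ s, p i) := by
  have hcard : (0 : ℝ) < s.card := by exact_mod_cast hs.card_pos
  calc ∑ i ∈ s, negMulLog (p i)
      ≤ ∑ i ∈ s, (p i * log (s.card / m) + ((s.card / m)⁻¹ - p i)) := by
        refine Finset.sum_le_sum fun i hi => ?_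
        have h := negMulLog_le_neg_mul_log_add_sub (hp i hi) (by positivity : 0 < (s.card / m)⁻¹)
        rw [log_inv] at h
        linarith
    _ = (∑ i ∈ s, p i) * log (s.card / m) + (m - ∑ i ∈ s, p i) := by
        rw [Finset.sum_add_distrib, Finset.sum_sub_distrib, ← Finset.sum_mul, Finset.sum_const,
          nsmul_eq_mul, show (s.card : ℝ) * (s.card / m)⁻¹ = m by field_simp]

lemma sum_negMulLog_le_of_one_div_four_le {ι : Type*} [Fintype ι] {p : ι → ℝ}
    (i₀ : ι) (hcard : 4 ≤ Fintype.card ι) (hp : ∀ i, 0 ≤ p i) (hsum : ∑ i, p i ≤ 1)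
    (hi₀ : 1 / 4 ≤ p i₀) :
    ∑ i, negMulLog (p i) ≤
      3 / 4 * log ((Fintype.card ι : ℝ) - 1) + 1 / 4 * log 4 + 3 / 4 * log (4 / 3) := by
  classical
  set c : ℝ := (Fintype.card ι : ℝ) - 1
  have hc : 3 ≤ c := by
    have : (4 : ℝ) ≤ Fintype.card ι := by exact_mod_cast hcard
    linarith
  set s := Finset.univ.erase i₀
  have hs_card : (s.card : ℝ) = c := by
    rw [Finset.card_erase_of_mem (Finset.mem_univ _), Finset.card_univ,
      Nat.cast_sub (by omega), Nat.cast_one]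
  have hs : s.Nonempty := Finset.card_pos.mp (by exact_mod_cast (by linarith : (0 : ℝ) < s.card))
  set L := log (c * 4 / 3)
  have hL : L = log c + log (4 / 3) := by
    show log (c * 4 / 3) = _
    rw [mul_div_assoc, log_mul (by positivity) (by norm_num)]
  have hL_four : log 4 ≤ L := log_le_log (by norm_num) (by linarith)
  have hL_one : 1 ≤ L := by
    have : 1 < log 4 := by
      rw [lt_log_iff_exp_lt (by norm_num)]
      exact exp_one_lt_d9.trans (by norm_num)
    linarith
  set T := ∑ i ∈ s, p i
  have hT : p i₀ + T = ∑ i, p i := Finset.add_sum_erase _ _ (Finset.mem_univ i₀)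
  have hT_nonneg : 0 ≤ T := Finset.sum_nonneg fun i _ => hp i
  -- Gibbs' inequality against the reference distribution `(1/4, 3/(4c), …, 3/(4c))`.
  have h_head : negMulLog (p i₀) ≤ p i₀ * log 4 + (1 / 4 - p i₀) := by
    have h := negMulLog_le_neg_mul_log_add_sub (hp i₀) (by norm_num : (0 : ℝ) < 4⁻¹)
    rw [log_inv] at h
    linarith
  have h_tail : ∑ i ∈ s, negMulLog (p i) ≤ T * L + (3 / 4 - T) := by
    have h := Finset.sum_negMulLog_le hs (fun i _ => hp i) (by norm_num : (0 : ℝ) < 3 / 4)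
    rwa [hs_card, div_div_eq_mul_div] at h
  calc ∑ i, negMulLog (p i) = negMulLog (p i₀) + ∑ i ∈ s, negMulLog (p i) :=
        (Finset.add_sum_erase _ _ (Finset.mem_univ i₀)).symm
    _ ≤ 1 / 4 * log 4 + 3 / 4 * L := by
        nlinarith [mul_nonneg (sub_nonneg.mpr hi₀) (sub_nonneg.mpr hL_four),
          mul_nonneg (by linarith : 0 ≤ 1 - p i₀ - T) (sub_nonneg.mpr hL_one)]
    _ = 3 / 4 * log c + 1 / 4 * log 4 + 3 / 4 * log (4 / 3) := by rw [hL]; ring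

/-- For `N ≥ 4` and any `N × N` unitary matrix `U`, the Shannon entropy of the probability
vector `Q = (R_1, R_2 − R_1, …, R_N − R_{N−1})` satisfies
`H(Q) ≤ (3/4)·ln(N−1) + (1/4)·ln 4 + (3/4)·ln(4/3)`. -/
theorem entropy_Q_upper_bound
    (N : ℕ) (hN : 4 ≤ N) (U : Matrix (Fin N) (Fin N) ℂ)
    (hU : U ∈ Matrix.unitaryGroup (Fin N) ℂ) :
    ∑ i : Fin N, Real.negMulLog (Qvec N U i) ≤
      3 / 4 * Real.log ((N : ℝ) - 1) + 1 / 4 * Real.log 4 + 3 / 4 * Real.log (4 / 3) := by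
  have hQ_first : 1 / 4 ≤ Qvec N U ⟨0, by omega⟩ := by
    simpa [Qvec, Rcoef] using one_div_four_le_Rcoef_one U
  have hQ_sum : ∑ i, Qvec N U i ≤ 1 := by
    rw [sum_Qvec]
    exact Rcoef_le_one U hU N
  simpa only [Fintype.card_fin] using
    sum_negMulLog_le_of_one_div_four_le _ (by simpa using hN) (Qvec_nonneg U) hQ_sum hQ_first
end

section
/- Let U_1,…,U_L be N×N unitary matrices, let |ψ⟩ ∈ ℂ^N be a unit vector and define (x_1,…,x_{NL}) = p^{(ψ,1)} ⊕ ⋯ ⊕ p^{(ψ,L)}. Then for every k ≤ NL, the sum of the k largest values among x_1,…,x_{NL} is at most S_{k−1}. As a consequence, p^{(ψ,1)} ⊕ ⋯ ⊕ p^{(ψ,L)} ≺ (S_0, S_1−S_0, S_2−S_1, …, S_{LN−1} − S_{LN−2}) and Σ_{i=1}^L H(p^{(ψ,i)}) ≥ −Σ_{i=1}^{LN−1} (S_i − S_{i−1})·ln(S_i − S_{i−1}) − S_0 ln S_0. -/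
/-- For a vector `x` with nonnegative entries, `topSum x k` is the sum of the `k` largest
coordinates of `x` (the maximum of `∑_{i ∈ s} x i` over subsets `s` with `|s| ≤ k`; for
`k ≥ card ι` it equals the total sum, which corresponds to padding `x` with zeros). -/
noncomputable def topSum {ι : Type*} [Fintype ι] (x : ι → ℝ) (k : ℕ) : ℝ :=
  ⨆ s : {s : Finset ι // s.card ≤ k}, ∑ i ∈ s.1, x i

/-- Majorization `x ≺ y` for vectors with nonnegative coordinates (the index types may
differ; this amounts to padding the shorter vector with zeros): for every `k`, the sum of
the `k` largest coordinates of `x` is at most the sum of the `k` largest coordinates of `y`,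
and the total sums of coordinates agree. -/
def Majorizes {ι κ : Type*} [Fintype ι] [Fintype κ] (x : ι → ℝ) (y : κ → ℝ) : Prop :=
  (∀ k : ℕ, topSum x k ≤ topSum y k) ∧ ∑ i, x i = ∑ j, y j

/-- Given `L` matrices `Us i` of size `N × N`, concatenated into an `N × (LN)` matrix `U`
(columns indexed by `Fin L × Fin N`), `maxColsNorm N L Us k = max_{|I| = k+1} ‖U_I‖` is the
maximal operator norm of an `N × (k+1)` matrix formed by `k+1` distinct columns of `U`. -/
noncomputable def maxColsNorm (N L : ℕ) (Us : Fin L → Matrix (Fin N) (Fin N) ℂ) (k : ℕ) : ℝ :=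
  ⨆ g : Fin (k + 1) ↪ Fin L × Fin N,
    opNorm (Matrix.of fun (i : Fin N) (j : Fin (k + 1)) => Us (g j).1 i (g j).2)

/-- `S_k = max{‖U_I‖² : |I| = k+1}` for the concatenation `U` of the matrices `Us i`. -/
noncomputable def Scoef (N L : ℕ) (Us : Fin L → Matrix (Fin N) (Fin N) ℂ) (k : ℕ) : ℝ :=
  maxColsNorm N L Us k ^ 2

open scoped Matrix.Norms.L2Operator
open Matrix

namespace SM

lemma opNorm_eq_l2 {m n : Type*} [Fintype m] [Fintype n] [DecidableEq n] [DecidableEq m]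
    (A : Matrix m n ℂ) : opNorm A = ‖A‖ := rfl

lemma norm_symm_sq {k : ℕ} (w : Fin k → ℂ) :
    ‖(WithLp.equiv 2 (Fin k → ℂ)).symm w‖ ^ 2 = ∑ j, ‖w j‖ ^ 2 := by
  rw [EuclideanSpace.norm_eq, Real.sq_sqrt (by positivity)]
  rfl

lemma sum_sq_le {m k : ℕ} (A : Matrix (Fin m) (Fin k) ℂ) (v : EuclideanSpace ℂ (Fin m)) :
    ∑ j, ‖∑ l, (starRingEnd ℂ) (A l j) * v l‖ ^ 2 ≤ opNorm A ^ 2 * ‖v‖ ^ 2 := by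
  have h := Matrix.l2_opNorm_mulVec Aᴴ v
  have hentry : ∀ j, (Aᴴ *ᵥ ⇑v) j = ∑ l, (starRingEnd ℂ) (A l j) * v l := by
    intro j
    simp [Matrix.mulVec, Matrix.conjTranspose_apply, dotProduct]
  have hL : ∑ j, ‖∑ l, (starRingEnd ℂ) (A l j) * v l‖ ^ 2
      = ‖(EuclideanSpace.equiv (Fin k) ℂ).symm (Aᴴ *ᵥ ⇑v)‖ ^ 2 := by
    rw [show (EuclideanSpace.equiv (Fin k) ℂ).symm (Aᴴ *ᵥ ⇑v)
        = (WithLp.equiv 2 (Fin k → ℂ)).symm (Aᴴ *ᵥ ⇑v) from rfl, norm_symm_sq]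
    exact Finset.sum_congr rfl fun j _ => by rw [hentry]
  rw [hL, Matrix.l2_opNorm_conjTranspose] at *
  calc ‖(EuclideanSpace.equiv (Fin k) ℂ).symm (Aᴴ *ᵥ ⇑v)‖ ^ 2 ≤ (‖A‖ * ‖v‖) ^ 2 := by
        apply pow_le_pow_left₀ (norm_nonneg _) h
    _ = opNorm A ^ 2 * ‖v‖ ^ 2 := by rw [opNorm_eq_l2]; ring

lemma maxColsNorm_nonneg (N L : ℕ) (Us : Fin L → Matrix (Fin N) (Fin N) ℂ) (k : ℕ) :
    0 ≤ maxColsNorm N L Us k :=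
  Real.iSup_nonneg fun _ => norm_nonneg _

lemma le_maxColsNorm (N L : ℕ) (Us : Fin L → Matrix (Fin N) (Fin N) ℂ) (k : ℕ)
    (g : Fin (k + 1) ↪ Fin L × Fin N) :
    opNorm (Matrix.of fun (i : Fin N) (j : Fin (k + 1)) => Us (g j).1 i (g j).2)
      ≤ maxColsNorm N L Us k :=
  le_ciSup (f := fun g : Fin (k + 1) ↪ Fin L × Fin N =>
    opNorm (Matrix.of fun (i : Fin N) (j : Fin (k + 1)) => Us (g j).1 i (g j).2))
    (Set.Finite.bddAbove (Set.finite_range _)) g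

lemma Scoef_nonneg (N L : ℕ) (Us : Fin L → Matrix (Fin N) (Fin N) ℂ) (k : ℕ) :
    0 ≤ Scoef N L Us k := by unfold Scoef; positivity

lemma opNorm_submatrix_le {m k k' : ℕ} (B : Matrix (Fin m) (Fin k) ℂ) (ι : Fin k' → Fin k)
    (hι : Function.Injective ι) :
    opNorm (B.submatrix id ι) ≤ opNorm B := by
  rw [opNorm_eq_l2, opNorm_eq_l2]
  rw [Matrix.l2_opNorm_def]
  apply ContinuousLinearMap.opNorm_le_bound _ (norm_nonneg _)
  intro v
  set f : Fin k → ℂ := fun j => ∑ j', if ι j' = j then v j' else 0 with hf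
  have hmv : (B.submatrix id ι) *ᵥ ⇑v = B *ᵥ f := by
    funext i
    simp only [Matrix.mulVec, dotProduct, Matrix.submatrix_apply, id, hf, Finset.mul_sum]
    rw [Finset.sum_comm]
    apply Finset.sum_congr rfl
    intro j' _
    simp only [mul_ite, mul_zero]
    rw [Finset.sum_ite_eq Finset.univ (ι j') (fun j => B i j * v j')]
    simp
  have hnf : ‖(WithLp.equiv 2 (Fin k → ℂ)).symm f‖ = ‖v‖ := by
    have h1 : ∑ j, ‖f j‖ ^ 2 = ∑ j', ‖v j'‖ ^ 2 := by
      have himg : ∑ j ∈ Finset.univ.image ι, ‖f j‖ ^ 2 = ∑ j', ‖f (ι j')‖ ^ 2 :=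
        Finset.sum_image (fun a _ b _ h => hι h)
      rw [← Finset.sum_subset (Finset.subset_univ (Finset.univ.image ι))
        (fun j _ hj => by
          have : f j = 0 := Finset.sum_eq_zero fun j' _ =>
            if_neg fun h => hj (Finset.mem_image.2 ⟨j', Finset.mem_univ _, h⟩)
          simp [this]), himg]
      apply Finset.sum_congr rfl
      intro j' _
      have : f (ι j') = v j' := by simp [hf, hι.eq_iff]
      rw [this]
    rw [show ‖(WithLp.equiv 2 (Fin k → ℂ)).symm f‖ = Real.sqrt (∑ j, ‖f j‖ ^ 2) from
        EuclideanSpace.norm_eq _,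
      show ‖v‖ = Real.sqrt (∑ j', ‖v j'‖ ^ 2) from EuclideanSpace.norm_eq v, h1]
  calc ‖(Matrix.toEuclideanLin (B.submatrix id ι)).toContinuousLinearMap v‖
      = ‖(WithLp.equiv 2 (Fin m → ℂ)).symm (B *ᵥ f)‖ := by
        rw [LinearMap.coe_toContinuousLinearMap', Matrix.toEuclideanLin_apply, ← hmv]; rfl
    _ = ‖(EuclideanSpace.equiv (Fin m) ℂ).symm (B *ᵥ ⇑((WithLp.equiv 2 (Fin k → ℂ)).symm f))‖ := rfl
    _ ≤ ‖B‖ * ‖(WithLp.equiv 2 (Fin k → ℂ)).symm f‖ := Matrix.l2_opNorm_mulVec B _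
    _ = ‖B‖ * ‖v‖ := by rw [hnf]

lemma embNonempty {N L k : ℕ} (h : k ≤ L * N) : Nonempty (Fin k ↪ Fin L × Fin N) :=
  ⟨⟨fun j => finProdFinEquiv.symm (Fin.castLE h j), fun a b hab => by
    have := finProdFinEquiv.symm.injective hab
    exact Fin.castLE_injective h this⟩⟩

lemma maxColsNorm_mono (N L : ℕ) (Us : Fin L → Matrix (Fin N) (Fin N) ℂ) (k : ℕ)
    (h : k + 2 ≤ L * N) :
    maxColsNorm N L Us k ≤ maxColsNorm N L Us (k + 1) := by
  have hne : Nonempty (Fin (k + 1) ↪ Fin L × Fin N) := embNonempty (by omega)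
  apply ciSup_le
  intro g
  obtain ⟨p, hp⟩ : ∃ p, p ∉ Finset.univ.map g := by
    by_contra h'
    push_neg at h'
    have hsub : Finset.univ ⊆ Finset.univ.map g := fun q _ => h' q
    have := Finset.card_le_card hsub
    rw [Finset.card_univ, Finset.card_map, Finset.card_univ, Fintype.card_fin] at this
    simp only [Fintype.card_prod, Fintype.card_fin] at this
    omega
  have hinj : Function.Injective
      (Fin.snoc (fun j => g j) p : Fin (k + 2) → Fin L × Fin N) := by
    intro a b hab
    rcases Fin.eq_castSucc_or_eq_last a with ⟨a', rfl⟩ | rfl <;>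
      rcases Fin.eq_castSucc_or_eq_last b with ⟨b', rfl⟩ | rfl
    · rw [Fin.snoc_castSucc, Fin.snoc_castSucc] at hab
      exact congrArg _ (g.injective hab)
    · rw [Fin.snoc_castSucc, Fin.snoc_last] at hab
      exact absurd (hab ▸ Finset.mem_map_of_mem g (Finset.mem_univ a')) hp
    · rw [Fin.snoc_castSucc, Fin.snoc_last] at hab
      exact absurd (hab ▸ Finset.mem_map_of_mem g (Finset.mem_univ b')) hp
    · rfl
  set g' : Fin (k + 2) ↪ Fin L × Fin N := ⟨_, hinj⟩ with hg'
  have hmat : (Matrix.of fun (i : Fin N) (j : Fin (k + 1)) => Us (g j).1 i (g j).2)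
      = (Matrix.of fun (i : Fin N) (j : Fin (k + 2)) =>
          Us (g' j).1 i (g' j).2).submatrix id Fin.castSucc := by
    ext i j
    simp [hg', Fin.snoc_castSucc]
  rw [hmat]
  exact le_trans (opNorm_submatrix_le _ _ (Fin.castSucc_injective _))
    (le_maxColsNorm N L Us (k + 1) g')

lemma Scoef_mono (N L : ℕ) (Us : Fin L → Matrix (Fin N) (Fin N) ℂ) (k : ℕ)
    (h : k + 2 ≤ L * N) : Scoef N L Us k ≤ Scoef N L Us (k + 1) := by
  unfold Scoef
  exact pow_le_pow_left₀ (maxColsNorm_nonneg N L Us k) (maxColsNorm_mono N L Us k h) 2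

lemma unitary_sum_sq {N : ℕ} {U : Matrix (Fin N) (Fin N) ℂ}
    (hU : U ∈ Matrix.unitaryGroup (Fin N) ℂ) (v : EuclideanSpace ℂ (Fin N)) :
    ∑ j, ‖∑ l, (starRingEnd ℂ) (U l j) * v l‖ ^ 2 = ‖v‖ ^ 2 := by
  have hstar : Uᴴ ∈ Matrix.unitaryGroup (Fin N) ℂ := by
    rw [← Matrix.star_eq_conjTranspose]; exact Unitary.star_mem hU
  have hT : Matrix.toEuclideanCLM (𝕜 := ℂ) Uᴴ ∈
      unitary (EuclideanSpace ℂ (Fin N) →L[ℂ] EuclideanSpace ℂ (Fin N)) := by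
    rw [Unitary.mem_iff] at hstar ⊢
    constructor
    · rw [← map_star, ← _root_.map_mul, hstar.1, _root_.map_one]
    · rw [← map_star, ← _root_.map_mul, hstar.2, _root_.map_one]
  have hnorm : ‖Matrix.toEuclideanCLM (𝕜 := ℂ) Uᴴ v‖ = ‖v‖ :=
    ContinuousLinearMap.norm_map_of_mem_unitary hT v
  have happ : Matrix.toEuclideanCLM (𝕜 := ℂ) Uᴴ v
      = (WithLp.equiv 2 (Fin N → ℂ)).symm (Uᴴ *ᵥ ⇑v) := rfl
  have hentry : ∀ j, (Uᴴ *ᵥ ⇑v) j = ∑ l, (starRingEnd ℂ) (U l j) * v l := by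
    intro j; simp [Matrix.mulVec, Matrix.conjTranspose_apply, dotProduct]
  calc ∑ j, ‖∑ l, (starRingEnd ℂ) (U l j) * v l‖ ^ 2
      = ∑ j, ‖(Uᴴ *ᵥ ⇑v) j‖ ^ 2 := Finset.sum_congr rfl fun j _ => by rw [hentry]
    _ = ‖(WithLp.equiv 2 (Fin N → ℂ)).symm (Uᴴ *ᵥ ⇑v)‖ ^ 2 := by
        rw [EuclideanSpace.norm_eq, Real.sq_sqrt (by positivity)]; rfl
    _ = ‖v‖ ^ 2 := by rw [← happ, hnorm]

lemma total_sum {N L : ℕ} (Us : Fin L → Matrix (Fin N) (Fin N) ℂ)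
    (hUs : ∀ i, Us i ∈ Matrix.unitaryGroup (Fin N) ℂ)
    (ψ : EuclideanSpace ℂ (Fin N)) (hψ : ‖ψ‖ = 1) :
    ∑ p : Fin L × Fin N, ‖∑ l, (starRingEnd ℂ) (Us p.1 l p.2) * ψ l‖ ^ 2 = L := by
  rw [Fintype.sum_prod_type]
  have : ∀ i : Fin L, ∑ j, ‖∑ l, (starRingEnd ℂ) (Us i l j) * ψ l‖ ^ 2 = 1 := by
    intro i; rw [unitary_sum_sq (hUs i) ψ, hψ]; norm_num
  rw [Finset.sum_congr rfl fun i _ => this i]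
  simp

lemma Scoef_last_le (N L : ℕ) (Us : Fin L → Matrix (Fin N) (Fin N) ℂ)
    (hUs : ∀ i, Us i ∈ Matrix.unitaryGroup (Fin N) ℂ) (h1 : 1 ≤ L * N) :
    Scoef N L Us (L * N - 1) ≤ L := by
  have hne : Nonempty (Fin (L * N - 1 + 1) ↪ Fin L × Fin N) := embNonempty (by omega)
  have hsq : maxColsNorm N L Us (L * N - 1) ≤ Real.sqrt L := by
    apply ciSup_le
    intro g
    have hbij : Function.Bijective g := by
      rw [Fintype.bijective_iff_injective_and_card]
      refine ⟨g.injective, ?_⟩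
      simp only [Fintype.card_prod, Fintype.card_fin]
      omega
    set A := Matrix.of fun (i : Fin N) (j : Fin (L * N - 1 + 1)) => Us (g j).1 i (g j).2 with hA
    rw [show opNorm A = ‖Aᴴ‖ by rw [opNorm_eq_l2, Matrix.l2_opNorm_conjTranspose],
      Matrix.l2_opNorm_def]
    apply ContinuousLinearMap.opNorm_le_bound _ (Real.sqrt_nonneg _)
    intro v
    have happ : (Matrix.toEuclideanLin Aᴴ).toContinuousLinearMap v
        = (WithLp.equiv 2 (Fin (L * N - 1 + 1) → ℂ)).symm (Aᴴ *ᵥ ⇑v) := rfl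
    have hentry : ∀ j, (Aᴴ *ᵥ ⇑v) j = ∑ l, (starRingEnd ℂ) (Us (g j).1 l (g j).2) * v l := by
      intro j
      simp [hA, Matrix.mulVec, Matrix.conjTranspose_apply, dotProduct]
    have hsq2 : ‖(Matrix.toEuclideanLin Aᴴ).toContinuousLinearMap v‖ ^ 2 = L * ‖v‖ ^ 2 := by
      rw [happ, show ‖(WithLp.equiv 2 (Fin (L * N - 1 + 1) → ℂ)).symm (Aᴴ *ᵥ ⇑v)‖
          = Real.sqrt (∑ j, ‖(Aᴴ *ᵥ ⇑v) j‖ ^ 2) from EuclideanSpace.norm_eq _,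
        Real.sq_sqrt (by positivity)]
      calc ∑ j, ‖(Aᴴ *ᵥ ⇑v) j‖ ^ 2
          = ∑ j, ‖∑ l, (starRingEnd ℂ) (Us (g j).1 l (g j).2) * v l‖ ^ 2 :=
            Finset.sum_congr rfl fun j _ => by rw [hentry]
        _ = ∑ p : Fin L × Fin N, ‖∑ l, (starRingEnd ℂ) (Us p.1 l p.2) * v l‖ ^ 2 :=
            Fintype.sum_bijective g hbij _ _ (fun j => rfl)
        _ = L * ‖v‖ ^ 2 := by
            rw [Fintype.sum_prod_type]
            rw [Finset.sum_congr rfl fun i _ => unitary_sum_sq (hUs i) v]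
            simp [mul_comm]
    refine le_of_eq ?_
    calc ‖(Matrix.toEuclideanLin Aᴴ).toContinuousLinearMap v‖
        = Real.sqrt (‖(Matrix.toEuclideanLin Aᴴ).toContinuousLinearMap v‖ ^ 2) :=
          (Real.sqrt_sq (norm_nonneg _)).symm
      _ = Real.sqrt (L * ‖v‖ ^ 2) := by rw [hsq2]
      _ = Real.sqrt L * ‖v‖ := by
          rw [Real.sqrt_mul (by positivity), Real.sqrt_sq (norm_nonneg _)]
  unfold Scoef
  calc maxColsNorm N L Us (L * N - 1) ^ 2 ≤ Real.sqrt L ^ 2 :=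
        pow_le_pow_left₀ (maxColsNorm_nonneg N L Us _) hsq 2
    _ = L := Real.sq_sqrt (Nat.cast_nonneg L)

lemma sum_finset_le {N L : ℕ} (Us : Fin L → Matrix (Fin N) (Fin N) ℂ)
    (ψ : EuclideanSpace ℂ (Fin N)) (hψ : ‖ψ‖ = 1) (k : ℕ)
    (t : Finset (Fin L × Fin N)) (ht : t.card = k + 1) :
    ∑ p ∈ t, ‖∑ l, (starRingEnd ℂ) (Us p.1 l p.2) * ψ l‖ ^ 2 ≤ Scoef N L Us k := by
  classical
  let g : Fin (k + 1) ↪ Fin L × Fin N :=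
    ((Finset.equivFinOfCardEq ht).symm.toEmbedding).trans (Function.Embedding.subtype _)
  have hmem : ∀ j, g j ∈ t := fun j => ((Finset.equivFinOfCardEq ht).symm j).2
  have hmap : Finset.univ.map g = t := by
    apply Finset.eq_of_subset_of_card_le
    · intro p hp
      obtain ⟨j, _, rfl⟩ := Finset.mem_map.1 hp
      exact hmem j
    · rw [ht, Finset.card_map, Finset.card_univ, Fintype.card_fin]
  rw [← hmap, Finset.sum_map]
  have hb := sum_sq_le (Matrix.of fun (i : Fin N) (j : Fin (k + 1)) => Us (g j).1 i (g j).2) ψ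
  calc ∑ j, ‖∑ l, (starRingEnd ℂ) (Us (g j).1 l (g j).2) * ψ l‖ ^ 2
      ≤ opNorm (Matrix.of fun (i : Fin N) (j : Fin (k + 1)) =>
          Us (g j).1 i (g j).2) ^ 2 * ‖ψ‖ ^ 2 := hb
    _ ≤ maxColsNorm N L Us k ^ 2 * 1 := by
        rw [hψ]
        norm_num
        exact pow_le_pow_left₀ (norm_nonneg _) (le_maxColsNorm N L Us k g) 2
    _ = Scoef N L Us k := by rw [mul_one]; rfl

lemma negMulLog_tangent {a b : ℝ} (ha : 0 < a) (hb : 0 ≤ b) :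
    Real.negMulLog b ≤ Real.negMulLog a + (-Real.log a - 1) * (b - a) := by
  rcases eq_or_lt_of_le hb with h0 | hb'
  · rw [← h0, Real.negMulLog_zero, Real.negMulLog]
    ring_nf
    nlinarith [ha]
  · have hlog := Real.log_le_sub_one_of_pos (div_pos ha hb')
    rw [Real.log_div (ne_of_gt ha) (ne_of_gt hb')] at hlog
    have key : b * (Real.log a - Real.log b) ≤ a - b := by
      have h2 : b * (a / b - 1) = a - b := by field_simp
      nlinarith [mul_le_mul_of_nonneg_left hlog (le_of_lt hb')]
    simp only [Real.negMulLog]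
    nlinarith [key]

lemma entropy_maj {n : ℕ} (hn : 1 ≤ n) (z y : ℕ → ℝ)
    (hz0 : ∀ i, 0 ≤ z i) (hzanti : ∀ i j, i ≤ j → z j ≤ z i)
    (hy0 : ∀ i, i < n → 0 ≤ y i)
    (hXY : ∀ k, k ≤ n → ∑ i ∈ Finset.range k, z i ≤ ∑ i ∈ Finset.range k, y i)
    (htot : ∑ i ∈ Finset.range n, z i = ∑ i ∈ Finset.range n, y i) :
    ∑ i ∈ Finset.range n, Real.negMulLog (y i)
      ≤ ∑ i ∈ Finset.range n, Real.negMulLog (z i) := by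
  set X : ℕ → ℝ := fun k => ∑ i ∈ Finset.range k, z i with hX
  set Y : ℕ → ℝ := fun k => ∑ i ∈ Finset.range k, y i with hY
  set c : ℕ → ℝ := fun i => -Real.log (z i) - 1 with hc
  have claim2 : ∀ i, i ≤ n → (∃ i₀, i₀ ≤ i ∧ z i₀ = 0) → Y i = X i := by
    rintro i hi ⟨i₀, hi₀, hz⟩
    have hzero : ∀ j ∈ Finset.Ico i n, z j = 0 := fun j hj =>
      le_antisymm (le_trans (hzanti i₀ j (le_trans hi₀ (Finset.mem_Ico.1 hj).1))
        (le_of_eq hz)) (hz0 j)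
    have hXn : X n = X i := by
      rw [hX]; simp only
      rw [← Finset.sum_range_add_sum_Ico z hi, Finset.sum_eq_zero hzero, add_zero]
    have hYn : Y i ≤ Y n := by
      rw [hY]; simp only
      rw [← Finset.sum_range_add_sum_Ico y hi]
      have : 0 ≤ ∑ j ∈ Finset.Ico i n, y j :=
        Finset.sum_nonneg fun j hj => hy0 j (Finset.mem_Ico.1 hj).2
      linarith
    have h1 : X i ≤ Y i := hXY i hi
    have h2 : Y n = X n := htot.symm
    linarith
  have claim1 : ∀ i, i < n → z i = 0 → y i = 0 := by
    intro i hi hz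
    have e1 : Y i = X i := claim2 i (by omega) ⟨i, le_refl i, hz⟩
    have e2 : Y (i + 1) = X (i + 1) := claim2 (i + 1) (by omega) ⟨i, by omega, hz⟩
    have hy : Y (i + 1) = Y i + y i := by rw [hY]; simp only [Finset.sum_range_succ]
    have hz' : X (i + 1) = X i + z i := by rw [hX]; simp only [Finset.sum_range_succ]
    rw [hz] at hz'
    linarith
  have hpt : ∀ i, i < n →
      Real.negMulLog (y i) ≤ Real.negMulLog (z i) + c i * (y i - z i) := by
    intro i hi
    rcases eq_or_lt_of_le (hz0 i) with h0 | hzi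
    · rw [← h0, claim1 i hi h0.symm]
      simp
    · exact negMulLog_tangent hzi (hy0 i hi)
  have hsum1 : ∑ i ∈ Finset.range n, Real.negMulLog (y i)
      ≤ ∑ i ∈ Finset.range n, Real.negMulLog (z i)
        + ∑ i ∈ Finset.range n, c i * (y i - z i) := by
    rw [← Finset.sum_add_distrib]
    exact Finset.sum_le_sum fun i hi => hpt i (Finset.mem_range.1 hi)
  have habel : ∑ i ∈ Finset.range n, c i * (y i - z i) ≤ 0 := by
    have hparts := Finset.sum_range_by_parts c (fun i => y i - z i) n
    simp only [smul_eq_mul] at hparts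
    have hDn : ∑ i ∈ Finset.range n, (y i - z i) = 0 := by
      rw [Finset.sum_sub_distrib]; linarith
    rw [hparts, hDn, mul_zero, zero_sub, neg_nonpos]
    apply Finset.sum_nonneg
    intro i hi
    have hi' : i + 1 < n := by have := Finset.mem_range.1 hi; omega
    have hD : 0 ≤ ∑ j ∈ Finset.range (i + 1), (y j - z j) := by
      rw [Finset.sum_sub_distrib]
      have := hXY (i + 1) (by omega)
      linarith
    rcases eq_or_lt_of_le (hz0 (i + 1)) with h0 | hzi1
    · have e : Y (i + 1) = X (i + 1) := claim2 (i + 1) (by omega) ⟨i + 1, le_refl _, h0.symm⟩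
      have : ∑ j ∈ Finset.range (i + 1), (y j - z j) = 0 := by
        rw [Finset.sum_sub_distrib]
        simp only [hX, hY] at e
        linarith
      rw [this, mul_zero]
    · have hzi : 0 < z i := lt_of_lt_of_le hzi1 (hzanti i (i + 1) (by omega))
      have hlog : Real.log (z (i + 1)) ≤ Real.log (z i) :=
        Real.log_le_log hzi1 (hzanti i (i + 1) (by omega))
      have hc' : 0 ≤ c (i + 1) - c i := by simp only [hc]; linarith
      exact mul_nonneg hc' hD
  linarith

lemma topSum_le_of {ι : Type*} [Fintype ι] (x : ι → ℝ) (k : ℕ) (a : ℝ)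
    (h : ∀ s : Finset ι, s.card ≤ k → ∑ i ∈ s, x i ≤ a) : topSum x k ≤ a := by
  have : Nonempty {s : Finset ι // s.card ≤ k} := ⟨⟨∅, by simp⟩⟩
  exact ciSup_le fun s => h s.1 s.2

lemma le_topSum {ι : Type*} [Fintype ι] (x : ι → ℝ) (k : ℕ) (s : Finset ι) (hs : s.card ≤ k) :
    ∑ i ∈ s, x i ≤ topSum x k := by
  classical
  exact le_ciSup (f := fun s : {s : Finset ι // s.card ≤ k} => ∑ i ∈ s.1, x i)
    (Set.Finite.bddAbove (Set.finite_range _)) ⟨s, hs⟩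

end SM

/-- Strong majorization for several measurements: let `U_1, …, U_L` be `N × N` unitary
matrices, `ψ` a unit vector, and `(x_1,…,x_{NL}) = p^{(ψ,1)} ⊕ ⋯ ⊕ p^{(ψ,L)}` where
`p^{(ψ,i)}_j = |⟨u_j^{(i)}|ψ⟩|²`.  Then for every `1 ≤ k ≤ NL` the sum of the `k` largest
values among the `x_i` is at most `S_{k−1}`; consequently
`p^{(ψ,1)} ⊕ ⋯ ⊕ p^{(ψ,L)} ≺ (S_0, S_1 − S_0, …, S_{LN−1} − S_{LN−2})` and
`∑_{i=1}^L H(p^{(ψ,i)}) ≥ −S_0·ln S_0 − ∑_{i=1}^{LN−1} (S_i − S_{i−1})·ln(S_i − S_{i−1})`. -/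
theorem strong_majorization_many_measurements
    (N L : ℕ) (Us : Fin L → Matrix (Fin N) (Fin N) ℂ)
    (hUs : ∀ i, Us i ∈ Matrix.unitaryGroup (Fin N) ℂ)
    (ψ : EuclideanSpace ℂ (Fin N)) (hψ : ‖ψ‖ = 1) :
    (∀ k : ℕ, 1 ≤ k → k ≤ N * L →
      topSum (fun p : Fin L × Fin N =>
          ‖∑ l, (starRingEnd ℂ) (Us p.1 l p.2) * ψ l‖ ^ 2) k ≤
        Scoef N L Us (k - 1)) ∧
    Majorizes
      (fun p : Fin L × Fin N => ‖∑ l, (starRingEnd ℂ) (Us p.1 l p.2) * ψ l‖ ^ 2)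
      (fun i : Fin (L * N) =>
        if i.1 = 0 then Scoef N L Us 0 else Scoef N L Us i.1 - Scoef N L Us (i.1 - 1)) ∧
    Real.negMulLog (Scoef N L Us 0) +
        ∑ i ∈ Finset.Icc 1 (L * N - 1), Real.negMulLog (Scoef N L Us i - Scoef N L Us (i - 1)) ≤
      ∑ i : Fin L, ∑ j : Fin N,
        Real.negMulLog (‖∑ l, (starRingEnd ℂ) (Us i l j) * ψ l‖ ^ 2) := by
  classical
  have hN : N ≠ 0 := by
    intro h
    subst h
    rw [EuclideanSpace.norm_eq] at hψ
    simp at hψ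
  set x : Fin L × Fin N → ℝ :=
    fun p => ‖∑ l, (starRingEnd ℂ) (Us p.1 l p.2) * ψ l‖ ^ 2 with hxdef
  have hx0 : ∀ p, 0 ≤ x p := fun p => by rw [hxdef]; positivity
  have hsum_le : ∀ (k : ℕ) (t : Finset (Fin L × Fin N)), t.card = k + 1 →
      ∑ p ∈ t, x p ≤ Scoef N L Us k := fun k t ht => SM.sum_finset_le Us ψ hψ k t ht
  have htotal : ∑ p : Fin L × Fin N, x p = L := SM.total_sum Us hUs ψ hψ
  have hpart1 : ∀ k : ℕ, 1 ≤ k → k ≤ N * L → topSum x k ≤ Scoef N L Us (k - 1) := by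
    intro k hk1 hk2
    have hk2' : k ≤ L * N := by rw [Nat.mul_comm] at hk2; exact hk2
    apply SM.topSum_le_of
    intro s hs
    obtain ⟨t, hst, -, htc⟩ := Finset.exists_subsuperset_card_eq (Finset.subset_univ s) hs
      (by rw [Finset.card_univ]; simp only [Fintype.card_prod, Fintype.card_fin]; exact hk2')
    calc ∑ p ∈ s, x p ≤ ∑ p ∈ t, x p :=
          Finset.sum_le_sum_of_subset_of_nonneg hst fun p _ _ => hx0 p
      _ ≤ Scoef N L Us (k - 1) := hsum_le (k - 1) t (by omega)
  set yN : ℕ → ℝ := fun i => if i = 0 then Scoef N L Us 0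
    else Scoef N L Us i - Scoef N L Us (i - 1) with hyNdef
  have hYsum : ∀ k, 1 ≤ k → ∑ i ∈ Finset.range k, yN i = Scoef N L Us (k - 1) := by
    intro k hk
    induction k with
    | zero => omega
    | succ m ih =>
      rcases Nat.eq_zero_or_pos m with rfl | hm
      · simp [hyNdef]
      · rw [Finset.sum_range_succ, ih hm]
        have h1 : yN m = Scoef N L Us m - Scoef N L Us (m - 1) := by
          rw [hyNdef]; simp only
          rw [if_neg (by omega)]
        rw [h1, Nat.add_sub_cancel]
        ring
  rcases Nat.eq_zero_or_pos (L * N) with hn0 | hn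
  · -- degenerate case L = 0
    have hL : L = 0 := by
      rcases Nat.mul_eq_zero.1 hn0 with h | h
      · exact h
      · exact absurd h hN
    subst hL
    haveI hIE : IsEmpty (Fin 0 × Fin N) := by infer_instance
    haveI hIE2 : IsEmpty (Fin (0 * N)) := by rw [Nat.zero_mul]; infer_instance
    have hxall : ∀ (s : Finset (Fin 0 × Fin N)), ∑ p ∈ s, x p = 0 := fun s => by
      rw [Finset.eq_empty_of_isEmpty s, Finset.sum_empty]
    have hyall : ∀ (s : Finset (Fin (0 * N))),
        ∑ i ∈ s, (if (i : Fin (0 * N)).1 = 0 then Scoef N 0 Us 0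
          else Scoef N 0 Us i.1 - Scoef N 0 Us (i.1 - 1)) = 0 := fun s => by
      rw [Finset.eq_empty_of_isEmpty s, Finset.sum_empty]
    have hS0 : Scoef N 0 Us 0 = 0 := by
      haveI : IsEmpty (Fin (0 + 1) ↪ Fin 0 × Fin N) :=
        ⟨fun g => (hIE.false (g 0))⟩
      unfold Scoef maxColsNorm
      rw [iSup, Set.range_eq_empty, Real.sSup_empty]
      norm_num
    refine ⟨hpart1, ⟨?_, ?_⟩, ?_⟩
    · intro k
      have h1 : topSum x k ≤ 0 := SM.topSum_le_of _ _ _ fun s _ => le_of_eq (hxall s)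
      have h2 : (0:ℝ) ≤ topSum (fun i : Fin (0 * N) =>
          if i.1 = 0 then Scoef N 0 Us 0 else Scoef N 0 Us i.1 - Scoef N 0 Us (i.1 - 1)) k := by
        have := SM.le_topSum (fun i : Fin (0 * N) =>
          if i.1 = 0 then Scoef N 0 Us 0 else Scoef N 0 Us i.1 - Scoef N 0 Us (i.1 - 1)) k ∅
          (by simp)
        simpa using this
      linarith
    · rw [Finset.univ_eq_empty, Finset.univ_eq_empty]
      simp
    · have hIcc : Finset.Icc 1 (0 * N - 1) = ∅ := by
        rw [Nat.zero_mul]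
        exact Finset.Icc_eq_empty (by omega)
      rw [hS0, hIcc]
      simp
  -- main case
  set n := L * N with hndef
  have hcardP : Fintype.card (Fin L × Fin N) = n := by
    rw [Fintype.card_prod, Fintype.card_fin, Fintype.card_fin, hndef]
  let e : Fin n ≃ Fin L × Fin N := finProdFinEquiv.symm
  let σ : Equiv.Perm (Fin n) := Tuple.sort (fun i : Fin n => -x (e i))
  have hmono : Monotone ((fun i : Fin n => -x (e i)) ∘ σ) := Tuple.monotone_sort _
  set z : ℕ → ℝ := fun i => if h : i < n then x (e (σ ⟨i, h⟩)) else 0 with hzdef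
  have hz0 : ∀ i, 0 ≤ z i := by
    intro i
    rw [hzdef]
    dsimp only
    split
    · exact hx0 _
    · exact le_refl 0
  have hzanti : ∀ i j, i ≤ j → z j ≤ z i := by
    intro i j hij
    rw [hzdef]
    dsimp only
    by_cases hj : j < n
    · have hi : i < n := lt_of_le_of_lt hij hj
      rw [dif_pos hj, dif_pos hi]
      have := hmono (show (⟨i, hi⟩ : Fin n) ≤ ⟨j, hj⟩ from hij)
      simpa using this
    · rw [dif_neg hj]
      split
      · exact hx0 _
      · exact le_refl 0
  have hinj2 : ∀ (k : ℕ) (hk : k ≤ n), Function.Injective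
      (fun j : Fin k => e (σ (Fin.castLE hk j))) := by
    intro k hk a b hab
    exact Fin.castLE_injective hk (σ.injective (e.injective hab))
  have hXz : ∀ (k : ℕ) (hk : k ≤ n), ∑ i ∈ Finset.range k, z i
      = ∑ p ∈ Finset.image (fun j : Fin k => e (σ (Fin.castLE hk j))) Finset.univ, x p := by
    intro k hk
    rw [Finset.sum_image (fun a _ b _ hab => hinj2 k hk hab)]
    rw [← Fin.sum_univ_eq_sum_range z k]
    apply Finset.sum_congr rfl
    intro j _
    rw [hzdef]
    dsimp only
    rw [dif_pos (lt_of_lt_of_le j.isLt hk)]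
    rfl
  have hcardim : ∀ (k : ℕ) (hk : k ≤ n),
      (Finset.image (fun j : Fin k => e (σ (Fin.castLE hk j))) Finset.univ).card = k := by
    intro k hk
    rw [Finset.card_image_of_injective _ (hinj2 k hk), Finset.card_univ, Fintype.card_fin]
  have hXle : ∀ k, 1 ≤ k → k ≤ n → ∑ i ∈ Finset.range k, z i ≤ Scoef N L Us (k - 1) := by
    intro k hk1 hkn
    rw [hXz k hkn]
    exact hsum_le (k - 1) _ (by rw [hcardim k hkn]; omega)
  have htotz : ∑ i ∈ Finset.range n, z i = L := by
    rw [hXz n (le_refl n)]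
    have himg : Finset.image (fun j : Fin n => e (σ (Fin.castLE (le_refl n) j))) Finset.univ
        = Finset.univ := by
      apply Finset.eq_univ_of_card
      rw [hcardim n (le_refl n), hcardP]
    rw [himg]
    exact htotal
  have hScoefLast : Scoef N L Us (n - 1) = L := by
    have hle := SM.Scoef_last_le N L Us hUs hn
    have hge : (L : ℝ) ≤ Scoef N L Us (n - 1) := by
      have h := hsum_le (n - 1) Finset.univ
        (by rw [Finset.card_univ, hcardP]; omega)
      rw [htotal] at h
      exact h
    rw [← hndef] at hle
    linarith
  have htoty : ∑ i ∈ Finset.range n, yN i = L := by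
    rw [hYsum n hn, hScoefLast]
  have hy0 : ∀ i, i < n → 0 ≤ yN i := by
    intro i hi
    rcases Nat.eq_zero_or_pos i with rfl | hi1
    · rw [hyNdef]; simp only [if_pos rfl]
      exact SM.Scoef_nonneg N L Us 0
    · have h := SM.Scoef_mono N L Us (i - 1) (by rw [← hndef]; omega)
      have h' : i - 1 + 1 = i := by omega
      rw [h'] at h
      rw [hyNdef]; simp only
      rw [if_neg (by omega)]
      linarith
  have hXY : ∀ k, k ≤ n → ∑ i ∈ Finset.range k, z i ≤ ∑ i ∈ Finset.range k, yN i := by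
    intro k hk
    rcases Nat.eq_zero_or_pos k with rfl | hk1
    · simp
    · rw [hYsum k hk1]
      exact hXle k hk1 hk
  have hEnt := SM.entropy_maj hn z yN hz0 hzanti hy0 hXY (htotz.trans htoty.symm)
  refine ⟨hpart1, ⟨?_, ?_⟩, ?_⟩
  · -- topSum comparison
    intro k
    rcases Nat.eq_zero_or_pos k with rfl | hk1
    · apply SM.topSum_le_of
      intro s hs
      rw [Finset.card_eq_zero.1 (Nat.le_zero.1 hs), Finset.sum_empty]
      have := SM.le_topSum (fun i : Fin n =>
        if i.1 = 0 then Scoef N L Us 0 else Scoef N L Us i.1 - Scoef N L Us (i.1 - 1)) 0 ∅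
        (by simp)
      simpa using this
    rcases le_or_gt k n with hkn | hkn
    · calc topSum x k ≤ Scoef N L Us (k - 1) := hpart1 k hk1 (by rw [Nat.mul_comm]; omega)
        _ = ∑ i ∈ Finset.range k, yN i := (hYsum k hk1).symm
        _ = ∑ j : Fin k, yN ((Fin.castLE hkn j) : Fin n).1 := by
            rw [← Fin.sum_univ_eq_sum_range yN k]
            rfl
        _ = ∑ i ∈ Finset.univ.map ⟨Fin.castLE hkn, Fin.castLE_injective hkn⟩,
              (fun i : Fin n => if i.1 = 0 then Scoef N L Us 0
                else Scoef N L Us i.1 - Scoef N L Us (i.1 - 1)) i := by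
            rw [Finset.sum_map]
            rfl
        _ ≤ topSum (fun i : Fin n =>
              if i.1 = 0 then Scoef N L Us 0
                else Scoef N L Us i.1 - Scoef N L Us (i.1 - 1)) k :=
            SM.le_topSum _ _ _ (by rw [Finset.card_map, Finset.card_univ, Fintype.card_fin])
    · apply SM.topSum_le_of
      intro s _
      calc ∑ p ∈ s, x p ≤ ∑ p ∈ Finset.univ, x p :=
            Finset.sum_le_sum_of_subset_of_nonneg (Finset.subset_univ s) fun p _ _ => hx0 p
        _ = L := htotal
        _ = ∑ i ∈ Finset.range n, yN i := htoty.symm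
        _ = ∑ i ∈ (Finset.univ : Finset (Fin n)),
              (fun i : Fin n => if i.1 = 0 then Scoef N L Us 0
                else Scoef N L Us i.1 - Scoef N L Us (i.1 - 1)) i := by
            rw [← Fin.sum_univ_eq_sum_range yN n]
        _ ≤ topSum (fun i : Fin n =>
              if i.1 = 0 then Scoef N L Us 0
                else Scoef N L Us i.1 - Scoef N L Us (i.1 - 1)) k :=
            SM.le_topSum _ _ _
              (by rw [Finset.card_univ, Fintype.card_fin]; omega)
  · -- total sums agree
    calc ∑ p : Fin L × Fin N, x p = (L : ℝ) := htotal
      _ = ∑ i ∈ Finset.range n, yN i := htoty.symm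
      _ = ∑ i : Fin n, (fun i : Fin n => if i.1 = 0 then Scoef N L Us 0
            else Scoef N L Us i.1 - Scoef N L Us (i.1 - 1)) i := by
          rw [← Fin.sum_univ_eq_sum_range yN n]
  · -- entropy inequality
    have hR : ∑ i ∈ Finset.range n, Real.negMulLog (z i)
        = ∑ i : Fin L, ∑ j : Fin N,
            Real.negMulLog (‖∑ l, (starRingEnd ℂ) (Us i l j) * ψ l‖ ^ 2) := by
      calc ∑ i ∈ Finset.range n, Real.negMulLog (z i)
          = ∑ i : Fin n, Real.negMulLog (z i.1) :=
            (Fin.sum_univ_eq_sum_range (fun i => Real.negMulLog (z i)) n).symm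
        _ = ∑ i : Fin n, Real.negMulLog (x (e (σ i))) := by
            apply Finset.sum_congr rfl
            intro i _
            rw [hzdef]
            dsimp only
            rw [dif_pos i.isLt]
        _ = ∑ p : Fin L × Fin N, Real.negMulLog (x p) :=
            Fintype.sum_bijective (fun i => e (σ i))
              ((σ.trans e).bijective) _ _ (fun i => rfl)
        _ = ∑ i : Fin L, ∑ j : Fin N, Real.negMulLog (x (i, j)) := Fintype.sum_prod_type _
        _ = ∑ i : Fin L, ∑ j : Fin N,
            Real.negMulLog (‖∑ l, (starRingEnd ℂ) (Us i l j) * ψ l‖ ^ 2) := rfl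
    have hIcc : Finset.Icc 1 (n - 1) = Finset.Ico 1 n := by
      rw [← Finset.Ico_add_one_right_eq_Icc,
        show n - 1 + 1 = n by omega]
    have hsplit : ∑ i ∈ Finset.range n, Real.negMulLog (yN i)
        = Real.negMulLog (yN 0) + ∑ i ∈ Finset.Ico 1 n, Real.negMulLog (yN i) := by
      rw [Finset.range_eq_Ico, ← Finset.sum_Ico_consecutive _ (Nat.zero_le 1) hn]
      congr 1
      rw [← Finset.range_eq_Ico, Finset.sum_range_one]
    have hL : Real.negMulLog (Scoef N L Us 0) +
        ∑ i ∈ Finset.Icc 1 (n - 1),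
          Real.negMulLog (Scoef N L Us i - Scoef N L Us (i - 1))
        = ∑ i ∈ Finset.range n, Real.negMulLog (yN i) := by
      rw [hsplit, hIcc]
      have h0 : Real.negMulLog (yN 0) = Real.negMulLog (Scoef N L Us 0) := by
        simp [hyNdef]
      have hcong : ∑ i ∈ Finset.Ico 1 n,
          Real.negMulLog (Scoef N L Us i - Scoef N L Us (i - 1))
          = ∑ i ∈ Finset.Ico 1 n, Real.negMulLog (yN i) := by
        apply Finset.sum_congr rfl
        intro i hi
        have hne : i ≠ 0 := by
          have := (Finset.mem_Ico.1 hi).1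
          omega
        rw [hyNdef]
        simp only
        rw [if_neg hne]
      rw [hcong, h0]
    rw [hR, ← hL] at hEnt
    exact hEnt
end
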